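/- arXiv:2112.07435 — 2 statements merged into one kernel-verified Lean document; each statement's English description precedes it below -/
import Mathlib

section
/- Let x be a strategy profile of a multi-leader congestion game with an adversary and let i be a player whose strategy x_i is a best response, i.e., π_i(x) ≤ π_i(r, x_{−i}) for every resource r. Let j be a player with ℓ_{x_j}(x) = ℓ_{x_i}(x) and a_{x_j} ≤ a_{x_i}. Then x_j is also a best response for player j: π_j(x) ≤ π_j(r, x_{−j}) for every resource r. -/
open Finset

variable {ι : Type*} {m : ℕ}

/-- The load of resource `r` under strategy profile `x`. -/
def load [Fintype ι] [DecidableEq ι] (x : ι → Fin m) (r : Fin m) : ℕ :=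
  (Finset.univ.filter (fun i => x i = r)).card

/-- The maximum load `M(x)`. -/
def maxLoad [Fintype ι] [DecidableEq ι] (x : ι → Fin m) : ℕ :=
  Finset.univ.sup (fun r => load x r)

/-- The number `p(x)` of resources with maximum load. -/
def numMax [Fintype ι] [DecidableEq ι] (x : ι → Fin m) : ℕ :=
  (Finset.univ.filter (fun r => load x r = maxLoad x)).card

/-- The attack term `κ*_r(x)`. -/
noncomputable def kappa [Fintype ι] [DecidableEq ι] (B : ℝ) (x : ι → Fin m) (r : Fin m) : ℝ :=
  if load x r = maxLoad x then B / (numMax x : ℝ) else 0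

/-- The cost `c_r(x)` of resource `r` under profile `x`. -/
noncomputable def rcost [Fintype ι] [DecidableEq ι] (a : Fin m → ℝ) (B : ℝ)
    (x : ι → Fin m) (r : Fin m) : ℝ :=
  a r * (load x r : ℝ) + kappa B x r

/-- The private cost `π_i(x)` of player `i` under profile `x`. -/
noncomputable def pcost [Fintype ι] [DecidableEq ι] (a : Fin m → ℝ) (B : ℝ)
    (x : ι → Fin m) (i : ι) : ℝ :=
  rcost a B x (x i)

/-- `x` is an `α`-approximate pure Nash equilibrium. -/
def isApproxPNE [Fintype ι] [DecidableEq ι] (a : Fin m → ℝ) (B : ℝ) (α : ℝ)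
    (x : ι → Fin m) : Prop :=
  ∀ (i : ι) (r : Fin m), pcost a B x i ≤ α * pcost a B (Function.update x i r) i

/-- `r` is the only resource with maximum load in `x`. -/
def onlyMax [Fintype ι] [DecidableEq ι] (x : ι → Fin m) (r : Fin m) : Prop :=
  load x r = maxLoad x ∧ ∀ s : Fin m, load x s = maxLoad x → s = r


section Aux
variable {n m : ℕ}

lemma load_update_eq (x : Fin n → Fin m) (j : Fin n) (r s : Fin m) (hr : r ≠ x j) :
    load (Function.update x j r) s =
      if s = r then load x s + 1 else if s = x j then load x s - 1 else load x s := by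
  unfold load
  by_cases h1 : s = r
  · rw [if_pos h1]
    have hs : s ≠ x j := by rw [h1]; exact hr
    have he : (Finset.univ.filter (fun i => Function.update x j r i = s)) =
        insert j (Finset.univ.filter (fun i => x i = s)) := by
      ext k
      simp only [Finset.mem_insert, Finset.mem_filter, Finset.mem_univ, true_and,
        Function.update_apply]
      by_cases hk : k = j
      · simp [hk, h1.symm]
      · simp [hk]
    rw [he, Finset.card_insert_of_notMem (by simp [Ne.symm hs])]
  · rw [if_neg h1]
    by_cases h2 : s = x j
    · rw [if_pos h2]
      have he : (Finset.univ.filter (fun i => Function.update x j r i = s)) =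
          (Finset.univ.filter (fun i => x i = s)).erase j := by
        ext k
        simp only [Finset.mem_erase, Finset.mem_filter, Finset.mem_univ, true_and,
          Function.update_apply]
        by_cases hk : k = j
        · simp [hk, show r ≠ s from fun h => h1 h.symm]
        · simp [hk]
      rw [he, Finset.card_erase_of_mem (by simp [h2.symm])]
    · rw [if_neg h2]
      congr 1
      ext k
      simp only [Finset.mem_filter, Finset.mem_univ, true_and, Function.update_apply]
      by_cases hk : k = j
      · simp [hk, show r ≠ s from fun h => h1 h.symm, show x j ≠ s from fun h => h2 h.symm]
      · simp [hk]

lemma load_update_le (x : Fin n → Fin m) (j : Fin n) (r s : Fin m) (hr : r ≠ x j)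
    (hs : s ≠ r) : load (Function.update x j r) s ≤ load x s := by
  rw [load_update_eq x j r s hr]
  split_ifs <;> omega

lemma load_swap (x : Fin n → Fin m) (i j : Fin n) (r : Fin m)
    (hri : r ≠ x i) (hrj : r ≠ x j) (hl : load x (x i) = load x (x j)) (s : Fin m) :
    load (Function.update x j r) s =
      load (Function.update x i r) (Equiv.swap (x i) (x j) s) := by
  rw [load_update_eq x j r s hrj, load_update_eq x i r _ hri]
  by_cases h1 : s = r
  · have h2 : Equiv.swap (x i) (x j) s = s := by
      rw [h1]; exact Equiv.swap_apply_of_ne_of_ne hri hrj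
    rw [h2, if_pos h1, if_pos h1]
  · by_cases h2 : s = x j
    · have hst : Equiv.swap (x i) (x j) s = x i := by rw [h2, Equiv.swap_apply_right]
      rw [hst, if_neg h1, if_pos h2, if_neg (Ne.symm hri), if_pos rfl, h2, hl]
    · by_cases h3 : s = x i
      · have hst : Equiv.swap (x i) (x j) s = x j := by rw [h3, Equiv.swap_apply_left]
        rw [hst, if_neg h1, if_neg h2, if_neg (Ne.symm hrj),
          if_neg (show x j ≠ x i from fun hh => h2 (h3.trans hh.symm)), h3, hl]
      · rw [Equiv.swap_apply_of_ne_of_ne h3 h2]; simp [h1, h2, h3]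

lemma maxLoad_eq_of (y z : Fin n → Fin m) (e : Fin m ≃ Fin m)
    (h : ∀ s, load y s = load z (e s)) : maxLoad y = maxLoad z := by
  unfold maxLoad
  apply le_antisymm
  · exact Finset.sup_le fun s _ => (h s) ▸ Finset.le_sup (Finset.mem_univ (e s))
  · refine Finset.sup_le fun s _ => ?_
    have hh := h (e.symm s)
    rw [Equiv.apply_symm_apply] at hh
    exact hh ▸ Finset.le_sup (Finset.mem_univ (e.symm s))

lemma numMax_eq_of (y z : Fin n → Fin m) (e : Fin m ≃ Fin m)
    (h : ∀ s, load y s = load z (e s)) : numMax y = numMax z := by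
  unfold numMax
  rw [maxLoad_eq_of y z e h]
  apply Finset.card_bij' (fun s _ => e s) (fun s _ => e.symm s) <;>
    simp only [Finset.mem_filter, Finset.mem_univ, true_and]
  · intro s hs; rw [← h s]; exact hs
  · intro s hs; rw [h (e.symm s), Equiv.apply_symm_apply]; exact hs
  · intro s _; simp
  · intro s _; simp

lemma kappa_nonneg (B : ℝ) (hB : 0 ≤ B) (x : Fin n → Fin m) (r : Fin m) :
    0 ≤ kappa B x r := by
  unfold kappa
  split_ifs
  · positivity
  · exact le_refl 0

end Aux

section Aux2
variable {n m : ℕ}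

lemma load_le_maxLoad (x : Fin n → Fin m) (s : Fin m) : load x s ≤ maxLoad x :=
  Finset.le_sup (Finset.mem_univ s)

end Aux2

/-- if x_i is a best response for player i, and player j's
resource has the same load and a smaller-or-equal coefficient, then x_j is a
best response for player j. -/
theorem best_response_transfer (n m : ℕ) (a : Fin m → ℝ) (ha : ∀ r, 0 ≤ a r)
    (B : ℝ) (hB : 0 < B) (x : Fin n → Fin m) (i j : Fin n)
    (hbr : ∀ r : Fin m, pcost a B x i ≤ pcost a B (Function.update x i r) i)
    (hload : load x (x j) = load x (x i)) (haij : a (x j) ≤ a (x i)) :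
    ∀ r : Fin m, pcost a B x j ≤ pcost a B (Function.update x j r) j := by
  have hji : pcost a B x j ≤ pcost a B x i := by
    unfold pcost rcost
    have hk : kappa B x (x j) = kappa B x (x i) := by
      unfold kappa; rw [hload]
    rw [hk, hload]
    have hm := mul_le_mul_of_nonneg_right haij
      (Nat.cast_nonneg (load x (x i)) : (0:ℝ) ≤ _)
    linarith
  intro r
  by_cases hrj : r = x j
  · rw [hrj, Function.update_eq_self]
  · by_cases hri : r = x i
    · -- r = x i, and x i ≠ x j
      subst hri
      have hyj : Function.update x j (x i) j = (x i) := Function.update_self j (x i) x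
      have hLy : load (Function.update x j (x i)) (x i) = load x (x i) + 1 := by
        rw [load_update_eq x j (x i) (x i) hrj, if_pos rfl]
      have hle : ∀ s, s ≠ (x i) → load (Function.update x j (x i)) s ≤ load x s := fun s hs =>
        load_update_le x j (x i) s hrj hs
      have hkk : kappa B x (x i) ≤ kappa B (Function.update x j (x i)) (x i) := by
        by_cases hmax : load x (x i) = maxLoad x
        · have hMy : maxLoad (Function.update x j (x i)) = load x (x i) + 1 := by
            apply le_antisymm
            · apply Finset.sup_le; intro s _
              by_cases hs : s = (x i)
              · rw [hs, hLy]
              · have h1 := hle s hs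
                have h2 := load_le_maxLoad x s
                omega
            · rw [← hLy]; exact load_le_maxLoad (Function.update x j (x i)) (x i)
          have hnum : (Finset.univ.filter
              (fun s => load (Function.update x j (x i)) s = maxLoad (Function.update x j (x i))))
              = {(x i)} := by
            ext s
            simp only [Finset.mem_filter, Finset.mem_univ, true_and, Finset.mem_singleton]
            constructor
            · intro hs
              by_contra hne
              have h1 := hle s hne
              have h2 := load_le_maxLoad x s
              rw [hMy] at hs
              omega
            · intro hs; rw [hs, hLy, hMy]
          have hky : kappa B (Function.update x j (x i)) (x i) = B := by
            unfold kappa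
            rw [if_pos (by rw [hLy, hMy])]
            unfold numMax
            rw [hnum, Finset.card_singleton, Nat.cast_one, div_one]
          rw [hky]
          have h1 : 1 ≤ numMax x := by
            have hmem : (x i) ∈ Finset.univ.filter (fun s => load x s = maxLoad x) := by
              simp [hmax]
            unfold numMax
            exact Finset.card_pos.mpr ⟨(x i), hmem⟩
          calc kappa B x (x i) = B / (numMax x : ℝ) := by unfold kappa; rw [if_pos hmax]
            _ ≤ B := div_le_self hB.le (by exact_mod_cast h1)
        · have h0 : kappa B x (x i) = 0 := by unfold kappa; rw [if_neg hmax]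
          rw [h0]
          exact kappa_nonneg B hB.le (Function.update x j (x i)) (x i)
      have hexp : pcost a B (Function.update x j (x i)) j
          = a (x i) * ((load x (x i) : ℝ) + 1) + kappa B (Function.update x j (x i)) (x i) := by
        unfold pcost rcost
        rw [hyj, hLy]
        push_cast
        ring
      have hx : pcost a B x i = a (x i) * ((load x (x i) : ℝ)) + kappa B x (x i) := rfl
      rw [hexp]
      have har := ha (x i)
      refine le_trans hji ?_
      rw [hx]
      linarith
    · -- r ≠ x i, r ≠ x j
      have h := load_swap x i j r hri hrj hload.symm
      have hM := maxLoad_eq_of (Function.update x j r) (Function.update x i r) _ h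
      have hN := numMax_eq_of (Function.update x j r) (Function.update x i r) _ h
      have hr : load (Function.update x j r) r = load (Function.update x i r) r := by
        rw [h r, Equiv.swap_apply_of_ne_of_ne hri hrj]
      have heq : pcost a B (Function.update x j r) j = pcost a B (Function.update x i r) i := by
        unfold pcost rcost kappa
        rw [Function.update_self, Function.update_self, hr, hM, hN]
      rw [heq]
      exact le_trans hji (hbr r)
end

section
/- Let a multi-leader congestion game with an adversary have m ≥ 2 resources ordered so that a_1 ≤ a_2 ≤ … ≤ a_m, and suppose n = M·m for some integer M ≥ 1. Let x be a strategy profile in which every resource has load exactly M, i.e., ℓ_r(x) = M for all r. Then for every real α ≥ 1, x is an α-approximate pure Nash equilibrium if and only if a_m·M + B/m ≤ α·(a_1·(M + 1) + B). -/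
open Finset

variable {ι : Type*} {m : ℕ}

lemma load_update_self [Fintype ι] [DecidableEq ι] (x : ι → Fin m) (i : ι) (r : Fin m)
    (hr : x i ≠ r) : load (Function.update x i r) (x i) = load x (x i) - 1 := by
  unfold load
  rw [show (univ.filter fun j => Function.update x i r j = x i)
      = (univ.filter fun j => x j = x i).erase i from ?_]
  · rw [card_erase_of_mem (by simp)]
  · ext j
    rcases eq_or_ne j i with rfl | hj
    · simp [Function.update_self, Ne.symm hr]
    · simp [Function.update_of_ne hj, hj]

lemma load_update_target [Fintype ι] [DecidableEq ι] (x : ι → Fin m) (i : ι) (r : Fin m)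
    (hr : x i ≠ r) : load (Function.update x i r) r = load x r + 1 := by
  unfold load
  rw [show (univ.filter fun j => Function.update x i r j = r)
      = insert i (univ.filter fun j => x j = r) from ?_]
  · rw [card_insert_of_notMem (by simp [hr])]
  · ext j
    rcases eq_or_ne j i with rfl | hj
    · simp
    · simp [Function.update_of_ne hj, hj]

lemma load_update_other [Fintype ι] [DecidableEq ι] (x : ι → Fin m) (i : ι) (r s : Fin m)
    (hs1 : s ≠ x i) (hs2 : s ≠ r) : load (Function.update x i r) s = load x s := by
  unfold load
  congr 1
  ext j
  rcases eq_or_ne j i with rfl | hj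
  · simp [Ne.symm hs2, Ne.symm hs1]
  · simp [Function.update_of_ne hj]

/-- a fully balanced profile (all loads equal to M) is an
α-approximate PNE iff a_m·M + B/m ≤ α·(a_1·(M+1) + B). -/
theorem balanced_profile_approx_PNE_iff (n m M : ℕ) (hm : 2 ≤ m) (hM : 1 ≤ M)
    (hn : n = M * m) (a : Fin m → ℝ) (ha0 : ∀ r, 0 ≤ a r) (ha : Monotone a)
    (B : ℝ) (hB : 0 < B) (x : Fin n → Fin m) (hx : ∀ r, load x r = M)
    (α : ℝ) (hα : 1 ≤ α) :
    isApproxPNE a B α x ↔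
      a ⟨m - 1, by omega⟩ * (M : ℝ) + B / (m : ℝ) ≤
        α * (a ⟨0, by omega⟩ * ((M : ℝ) + 1) + B) := by
  have hm0 : 0 < m := by omega
  have hmax : maxLoad x = M := by
    refine le_antisymm (Finset.sup_le fun r _ => (hx r).le) ?_
    exact (hx ⟨0, hm0⟩) ▸ Finset.le_sup (mem_univ (⟨0, hm0⟩ : Fin m))
  have hnum : numMax x = m := by
    simp [numMax, hx, hmax]
  have hkx : ∀ r, kappa B x r = B / m := fun r => by
    simp [kappa, hx, hmax, hnum]
  have hpx : ∀ i, pcost a B x i = a (x i) * M + B / m := fun i => by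
    simp [pcost, rcost, hx, hkx]
  have key : ∀ (i : Fin n) (r : Fin m), x i ≠ r →
      pcost a B (Function.update x i r) i = a r * ((M : ℝ) + 1) + B := by
    intro i r hr
    set y := Function.update x i r with hy
    have hyr : load y r = M + 1 := by rw [hy, load_update_target x i r hr, hx]
    have hyxi : load y (x i) = M - 1 := by rw [hy, load_update_self x i r hr, hx]
    have hyo : ∀ s, s ≠ x i → s ≠ r → load y s = M := fun s h1 h2 => by
      rw [hy, load_update_other x i r s h1 h2, hx]
    have hle : ∀ s, load y s ≤ M + 1 := by
      intro s
      rcases eq_or_ne s r with rfl | h2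
      · omega
      rcases eq_or_ne s (x i) with rfl | h1
      · omega
      · rw [hyo s h1 h2]; omega
    have hmaxy : maxLoad y = M + 1 :=
      le_antisymm (Finset.sup_le fun s _ => hle s) (hyr ▸ Finset.le_sup (mem_univ r))
    have hfilter : (univ.filter fun s => load y s = maxLoad y) = {r} := by
      ext s
      simp only [mem_filter, mem_univ, true_and, mem_singleton, hmaxy]
      constructor
      · intro h
        by_contra h2
        rcases eq_or_ne s (x i) with rfl | h1
        · omega
        · rw [hyo s h1 h2] at h; omega
      · rintro rfl; exact hyr
    have hnumy : numMax y = 1 := by rw [numMax, hfilter, card_singleton]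
    have hyi : y i = r := Function.update_self i r x
    rw [pcost, hyi, rcost, hyr, kappa, hyr, hmaxy, hnumy]
    push_cast
    norm_num
  constructor
  · intro h
    have hne : (univ.filter fun j => x j = (⟨m - 1, by omega⟩ : Fin m)).Nonempty := by
      rw [← card_pos]
      change 0 < load x _
      rw [hx]; omega
    obtain ⟨i, hi⟩ := hne
    simp only [mem_filter, mem_univ, true_and] at hi
    have hne0 : x i ≠ ⟨0, by omega⟩ := by
      rw [hi]
      intro hc
      have := congrArg Fin.val hc
      simp at this
      omega
    have := h i ⟨0, by omega⟩
    rwa [hpx i, key i _ hne0, hi] at this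
  · intro h i r
    rcases eq_or_ne (x i) r with rfl | hne
    · rw [Function.update_eq_self]
      have h0 : 0 ≤ pcost a B x i := by
        rw [hpx]
        have := mul_nonneg (ha0 (x i)) (Nat.cast_nonneg M)
        have := div_nonneg hB.le (Nat.cast_nonneg (α := ℝ) m)
        linarith
      nlinarith
    · rw [hpx, key i r hne]
      have h1 : a (x i) ≤ a ⟨m - 1, by omega⟩ := by
        apply ha
        exact Fin.le_def.mpr (by have := (x i).isLt; simp; omega)
      have h2 : a ⟨0, by omega⟩ ≤ a r := by
        apply ha
        exact Fin.le_def.mpr (by simp)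
      have hα0 : 0 ≤ α := by linarith
      have hM0 : (0 : ℝ) ≤ (M : ℝ) + 1 := by positivity
      nlinarith [mul_nonneg hα0 (mul_nonneg (sub_nonneg.mpr h2) hM0),
        mul_le_mul_of_nonneg_right h1 (Nat.cast_nonneg (α := ℝ) M)]
end
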